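/- The set S has exactly six facets. -/

import Mathlib

/-- The polytope S given by the six inequalities. -/
def S : Set (Fin 3 → ℝ) :=
  {x | 25 - 2 * x 0 - 25 * x 1 + 10 * x 2 ≥ 0 ∧
       -2 + 25 * x 0 + 2 * x 1 + 10 * x 2 ≥ 0 ∧
       25 - 2 * x 0 + 25 * x 1 + 10 * x 2 ≥ 0 ∧
       -2 + 25 * x 0 - 2 * x 1 + 10 * x 2 ≥ 0 ∧
       -(x 1) - x 2 ≥ 0 ∧
       2 - x 1 + x 2 ≥ 0}

/-- A facet of `K` is a proper exposed face of `K` that is maximal (w.r.t. inclusion)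
among proper exposed faces of `K`. -/
def IsFacet (K F : Set (Fin 3 → ℝ)) : Prop :=
  IsExposed ℝ K F ∧ F ≠ K ∧ ∀ G, IsExposed ℝ K G → G ≠ K → F ⊆ G → F = G

/-!
Write `S = {x | ∀ i, aᵢ x ≤ bᵢ}` for six linear functionals `aᵢ`; the face `Fᵢ` where the `i`-th
inequality is tight is exposed by `aᵢ`. A proper exposed face `G` lies in some `Fᵢ`: otherwise,
averaging points of `G` gives a point of `G` at which no inequality is tight, i.e. an interior point
of `S`, and a functional attaining its maximum over `S` at an interior point vanishes, so `G = S`.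
For each `i` some point of `S` makes only the `i`-th inequality tight, so the `Fᵢ` are pairwise
non-nested. Hence they are exactly the facets, and there are six of them.
-/

section Polyhedron

variable {E ι : Type*} [AddCommGroup E] [Module ℝ E] [TopologicalSpace E]
  (a : ι → StrongDual ℝ E) (b : ι → ℝ)

def polyhedron : Set E := {x | ∀ i, a i x ≤ b i}

def polyhedronFace (i : ι) : Set E := {x ∈ polyhedron a b | a i x = b i}

/-- Each inequality is the only tight one at some point of the polyhedron; for a full-dimensional
polyhedron this is the usual irredundancy of the system. -/
def IsIrredundant : Prop := ∀ i, ∃ p ∈ polyhedron a b, ∀ j, a j p = b j ↔ j = i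

variable {a b}

theorem convex_polyhedron : Convex ℝ (polyhedron a b) := by
  simp only [polyhedron, Set.ofPred_forall]
  exact convex_iInter fun i => convex_halfSpace_le (a i).isLinear (b i)

theorem setOf_forall_lt_subset_interior_polyhedron [Finite ι] :
    {x | ∀ i, a i x < b i} ⊆ interior (polyhedron a b) := by
  refine interior_maximal (fun x hx i => (hx i).le) ?_
  simp only [Set.ofPred_forall]
  exact isOpen_iInter_of_finite fun i => isOpen_lt (a i).continuous continuous_const

theorem isExposed_polyhedronFace (i : ι) :
    IsExposed ℝ (polyhedron a b) (polyhedronFace a b i) := by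
  rintro ⟨p, hpP, hpi⟩
  refine ⟨a i, Set.ext fun x => ⟨fun ⟨hxP, hxi⟩ => ⟨hxP, fun y hyP => hxi ▸ hyP i⟩,
    fun ⟨hxP, hmax⟩ => ⟨hxP, le_antisymm (hxP i) (hpi ▸ hmax p hpP)⟩⟩⟩

theorem Convex.exists_forall_lt [Finite ι] {G : Set E} (hG : Convex ℝ G) (hne : G.Nonempty)
    (hle : ∀ x ∈ G, ∀ i, a i x ≤ b i) (hlt : ∀ i, ∃ x ∈ G, a i x < b i) :
    ∃ z ∈ G, ∀ i, a i z < b i := by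
  classical
  have := Fintype.ofFinite ι
  suffices h : ∀ s : Finset ι, ∃ z ∈ G, ∀ i ∈ s, a i z < b i by
    obtain ⟨z, hzG, hz⟩ := h Finset.univ
    exact ⟨z, hzG, fun i => hz i (Finset.mem_univ i)⟩
  intro s
  induction s using Finset.induction_on with
  | empty => exact hne.imp fun z hz => ⟨hz, by simp⟩
  | insert j s _ ih =>
    obtain ⟨z, hzG, hz⟩ := ih
    obtain ⟨x, hxG, hx⟩ := hlt j
    refine ⟨(1 / 2 : ℝ) • z + (1 / 2 : ℝ) • x, hG hzG hxG (by norm_num) (by norm_num) (by norm_num),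
      fun i hi => ?_⟩
    have hmid : a i ((1 / 2 : ℝ) • z + (1 / 2 : ℝ) • x) = (a i z + a i x) / 2 := by
      simp only [map_add, map_smul, smul_eq_mul]; ring
    rw [hmid]
    rcases Finset.mem_insert.1 hi with rfl | hi
    · linarith [hle z hzG i]
    · linarith [hz i hi, hle x hxG i]

theorem IsIrredundant.eq_of_polyhedronFace_subset (hirr : IsIrredundant a b) {i j : ι}
    (h : polyhedronFace a b i ⊆ polyhedronFace a b j) : i = j := by
  obtain ⟨p, hpP, hp⟩ := hirr i
  exact ((hp j).1 (h ⟨hpP, (hp i).2 rfl⟩).2).symm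

theorem IsIrredundant.polyhedronFace_injective (hirr : IsIrredundant a b) :
    Function.Injective (polyhedronFace a b) :=
  fun _ _ h => hirr.eq_of_polyhedronFace_subset h.le

theorem IsIrredundant.polyhedronFace_ne_polyhedron [Nontrivial ι] (hirr : IsIrredundant a b)
    (i : ι) : polyhedronFace a b i ≠ polyhedron a b := by
  obtain ⟨j, hji⟩ := exists_ne i
  intro h
  exact hji (hirr.eq_of_polyhedronFace_subset (h ▸ Set.sep_subset _ _))

end Polyhedron

theorem IsExposed.eq_of_mem_interior {E : Type*} [NormedAddCommGroup E] [NormedSpace ℝ E]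
    {A B : Set E} {z : E} (hAB : IsExposed ℝ A B) (hzB : z ∈ B) (hz : z ∈ interior A) :
    B = A := by
  obtain ⟨l, rfl⟩ := hAB ⟨z, hzB⟩
  have hmax : IsLocalMax l z :=
    Filter.mem_of_superset (mem_interior_iff_mem_nhds.1 hz) fun y hy => hzB.2 y hy
  have hl : l = 0 := hmax.hasFDerivAt_eq_zero l.hasFDerivAt
  simp [hl]

theorem IsExposed.exists_subset_polyhedronFace {E ι : Type*} [NormedAddCommGroup E]
    [NormedSpace ℝ E] [Finite ι] [Nonempty ι] {a : ι → StrongDual ℝ E} {b : ι → ℝ} {G : Set E}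
    (hG : IsExposed ℝ (polyhedron a b) G) (hGP : G ≠ polyhedron a b) :
    ∃ i, G ⊆ polyhedronFace a b i := by
  rcases G.eq_empty_or_nonempty with rfl | hne
  · exact ⟨Classical.arbitrary ι, Set.empty_subset _⟩
  by_contra! hsub
  have hlt : ∀ i, ∃ x ∈ G, a i x < b i := fun i => by
    obtain ⟨x, hxG, hx⟩ := Set.not_subset.1 (hsub i)
    exact ⟨x, hxG, (hG.subset hxG i).lt_of_ne fun h => hx ⟨hG.subset hxG, h⟩⟩
  obtain ⟨z, hzG, hz⟩ :=
    (hG.convex convex_polyhedron).exists_forall_lt hne (fun x hx => hG.subset hx) hlt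
  exact hGP (hG.eq_of_mem_interior hzG (setOf_forall_lt_subset_interior_polyhedron hz))

theorem IsIrredundant.setOf_isFacet_polyhedron {ι : Type*} [Finite ι] [Nontrivial ι]
    {a : ι → StrongDual ℝ (Fin 3 → ℝ)} {b : ι → ℝ} (hirr : IsIrredundant a b) :
    {F | IsFacet (polyhedron a b) F} = Set.range (polyhedronFace a b) := by
  ext F
  constructor
  · rintro ⟨hF, hFP, hmax⟩
    obtain ⟨i, hi⟩ := hF.exists_subset_polyhedronFace hFP
    exact ⟨i, (hmax _ (isExposed_polyhedronFace i) (hirr.polyhedronFace_ne_polyhedron i) hi).symm⟩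
  · rintro ⟨i, rfl⟩
    refine ⟨isExposed_polyhedronFace i, hirr.polyhedronFace_ne_polyhedron i,
      fun G hG hGP hiG => ?_⟩
    obtain ⟨j, hj⟩ := hG.exists_subset_polyhedronFace hGP
    obtain rfl := hirr.eq_of_polyhedronFace_subset (hiG.trans hj)
    exact hiG.antisymm hj

def constraintMatrix : Matrix (Fin 6) (Fin 3) ℝ :=
  !![2, 25, -10; -25, -2, -10; 2, -25, -10; -25, 2, -10; 0, 1, 1; 0, 1, -1]

def constraintBound : Fin 6 → ℝ := ![25, -2, 25, -2, 0, 2]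

noncomputable def constraint (i : Fin 6) : StrongDual ℝ (Fin 3 → ℝ) :=
  (ContinuousLinearMap.proj i).comp (Matrix.toLin' constraintMatrix).toContinuousLinearMap

theorem constraint_apply (i : Fin 6) (x : Fin 3 → ℝ) :
    constraint i x = constraintMatrix.mulVec x i := rfl

theorem S_eq_polyhedron : S = polyhedron constraint constraintBound := by
  ext x
  simp only [S, polyhedron, Set.mem_ofPred_eq, Fin.forall_fin_succ, constraint_apply,
    constraintMatrix, constraintBound, Matrix.mulVec, dotProduct, Fin.sum_univ_three,
    Matrix.of_apply, Matrix.cons_val', Matrix.cons_val_fin_one, Matrix.cons_val_zero,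
    Matrix.cons_val_one, Matrix.cons_val, Matrix.cons_val_succ, forall_const]
  constructor
  · rintro ⟨h₀, h₁, h₂, h₃, h₄, h₅⟩
    refine ⟨?_, ?_, ?_, ?_, ?_, ?_⟩ <;> linarith
  · rintro ⟨h₀, h₁, h₂, h₃, h₄, h₅⟩
    refine ⟨?_, ?_, ?_, ?_, ?_, ?_⟩ <;> linarith

noncomputable def facetPoint : Fin 6 → Fin 3 → ℝ :=
  ![![25 / 4, 1 / 10, -1], ![61 / 125, -1 / 10, -1], ![25 / 4, -1 / 10, -1],
    ![61 / 125, 1 / 10, -1], ![1, 0, 0], ![1, 0, -2]]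

theorem constraint_facetPoint (i j : Fin 6) :
    constraint j (facetPoint i) ≤ constraintBound j ∧
      (constraint j (facetPoint i) = constraintBound j ↔ j = i) := by
  fin_cases i <;> fin_cases j <;>
    norm_num [constraint_apply, constraintMatrix, constraintBound, facetPoint, Matrix.mulVec,
      dotProduct, Fin.sum_univ_three, Matrix.cons_val_two]

theorem isIrredundant_constraint : IsIrredundant constraint constraintBound :=
  fun i => ⟨facetPoint i, fun j => (constraint_facetPoint i j).1,
    fun j => (constraint_facetPoint i j).2⟩

/-- S has exactly six facets. -/
theorem stmt_6 :
    {F | IsFacet S F}.Finite ∧ {F | IsFacet S F}.ncard = 6 := by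
  rw [S_eq_polyhedron, isIrredundant_constraint.setOf_isFacet_polyhedron]
  refine ⟨Set.finite_range _, ?_⟩
  rw [Set.ncard_range_of_injective isIrredundant_constraint.polyhedronFace_injective,
    Nat.card_fin]
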